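/- arXiv:1312.7567 — 3 statements merged into one kernel-verified Lean document; each statement's English description precedes it below -/
import Mathlib

section
/- Let P and P̃ be monic real polynomials of degree d, each splitting over ℝ with largest roots λ₁ and λ̃₁ respectively, and suppose |P(λ) − P̃(λ)| ≤ Cε for all λ in an interval containing all roots of both polynomials. Then |λ₁ − λ̃₁| ≤ (Cε)^{1/d}. -/
/-!
At the largest root `λ₁` of `P` we have `P(λ₁) = 0`, so `|P̃(λ₁)| ≤ Cε`. If `λ₁ ≥ λ̃₁`, every
factor `λ₁ - λ̃ᵢ` of `P̃(λ₁)` is at least `λ₁ - λ̃₁ ≥ 0`, hence `(λ₁ - λ̃₁)^d ≤ P̃(λ₁) ≤ Cε`.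
The case `λ̃₁ ≥ λ₁` is symmetric.
-/

open Finset

theorem pow_sub_le_prod_sub_of_antitone {d : ℕ} (hd : 0 < d) {rt : Fin d → ℝ}
    (hrt : Antitone rt) {x : ℝ} (hx : rt ⟨0, hd⟩ ≤ x) :
    (x - rt ⟨0, hd⟩) ^ d ≤ ∏ i, (x - rt i) :=
  calc (x - rt ⟨0, hd⟩) ^ d = ∏ _i : Fin d, (x - rt ⟨0, hd⟩) := by simp
    _ ≤ ∏ i, (x - rt i) :=
      prod_le_prod (fun _ _ => sub_nonneg.2 hx)
        (fun i _ => sub_le_sub_left (hrt (Fin.mk_le_of_le_val (Nat.zero_le _))) x)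

theorem sub_le_rpow_of_prod_sub_le {d : ℕ} (hd : 0 < d) {rt : Fin d → ℝ}
    (hrt : Antitone rt) {x δ : ℝ} (hx : rt ⟨0, hd⟩ ≤ x) (hδ : ∏ i, (x - rt i) ≤ δ) :
    x - rt ⟨0, hd⟩ ≤ δ ^ ((1 : ℝ) / d) := by
  have hgap : 0 ≤ x - rt ⟨0, hd⟩ := sub_nonneg.2 hx
  calc x - rt ⟨0, hd⟩ = ((x - rt ⟨0, hd⟩) ^ d) ^ ((1 : ℝ) / d) := by
        rw [one_div, Real.pow_rpow_inv_natCast hgap hd.ne']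
    _ ≤ δ ^ ((1 : ℝ) / d) :=
        Real.rpow_le_rpow (by positivity)
          ((pow_sub_le_prod_sub_of_antitone hd hrt hx).trans hδ) (by positivity)

theorem top_root_sub_le_of_abs_prod_sub_prod_le {d : ℕ} (hd : 0 < d) {r rt : Fin d → ℝ}
    (hrt : Antitone rt) {δ : ℝ} (hle : rt ⟨0, hd⟩ ≤ r ⟨0, hd⟩)
    (hclose : |(∏ i, (r ⟨0, hd⟩ - r i)) - ∏ i, (r ⟨0, hd⟩ - rt i)| ≤ δ) :
    r ⟨0, hd⟩ - rt ⟨0, hd⟩ ≤ δ ^ ((1 : ℝ) / d) := by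
  have hroot : ∏ i, (r ⟨0, hd⟩ - r i) = 0 :=
    prod_eq_zero (mem_univ ⟨0, hd⟩) (sub_self _)
  rw [hroot, zero_sub, abs_neg] at hclose
  exact sub_le_rpow_of_prod_sub_le hd hrt hle (le_of_abs_le hclose)

theorem stmt5_general (d : ℕ) (hd : 0 < d) (L C ε : ℝ)
    (r rt : Fin d → ℝ) (hr : ∀ i, |r i| ≤ L) (hrt : ∀ i, |rt i| ≤ L)
    (hmr : Antitone r) (hmrt : Antitone rt)
    (hclose : ∀ x : ℝ, |x| ≤ L →
      |(∏ i : Fin d, (x - r i)) - ∏ i : Fin d, (x - rt i)| ≤ C * ε) :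
    |r ⟨0, hd⟩ - rt ⟨0, hd⟩| ≤ (C * ε) ^ ((1 : ℝ) / d) := by
  rcases le_total (rt ⟨0, hd⟩) (r ⟨0, hd⟩) with h | h
  · rw [abs_of_nonneg (sub_nonneg.2 h)]
    exact top_root_sub_le_of_abs_prod_sub_prod_le hd hmrt h (hclose _ (hr _))
  · rw [abs_sub_comm, abs_of_nonneg (sub_nonneg.2 h)]
    exact top_root_sub_le_of_abs_prod_sub_prod_le hd hmr h
      (by rw [abs_sub_comm]; exact hclose _ (hrt _))

/-- If two monic degree-`d` real polynomials split with all roots in `[-L, L]` and are uniformly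
`Cε`-close on `[-L, L]`, then their largest roots differ by at most `(Cε)^{1/d}`. -/
theorem stmt5 (d : ℕ) (hd : 0 < d) (L C ε : ℝ) (hC : 0 < C) (hε : 0 < ε)
    (r rt : Fin d → ℝ) (hr : ∀ i, |r i| ≤ L) (hrt : ∀ i, |rt i| ≤ L)
    (hmr : Antitone r) (hmrt : Antitone rt)
    (hclose : ∀ x : ℝ, |x| ≤ L →
      |(∏ i : Fin d, (x - r i)) - ∏ i : Fin d, (x - rt i)| ≤ C * ε) :
    |r ⟨0, hd⟩ - rt ⟨0, hd⟩| ≤ (C * ε) ^ ((1 : ℝ) / d) :=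
  stmt5_general d hd L C ε r rt hr hrt hmr hmrt hclose
end

section
/- Fix s₀ ∈ ℝ^d and ε₀ > 0, and let ℰ be the set of ESP vectors of real symmetric d×d matrices (equivalently, vectors s such that P_s splits over ℝ). Then there exists C > 0 depending only on s₀ and ε₀ such that for all ε < ε₀, the set of largest-roots {λ₁(s) : s ∈ S(s₀,ε) ∩ ℰ}, where S(s₀,ε) = {t : ‖t − s₀‖_∞ ≤ ε}, has diameter at most C ε^{1/d}. -/
/-- The polynomial `P_s(λ) = λ^d + ∑_{k=1}^d (-1)^k s_k λ^{d-k}` as a function,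
with `s_k = s ⟨k-1⟩` for `k = 1, …, d`. -/
noncomputable def Pfun (d : ℕ) (s : Fin d → ℝ) (x : ℝ) : ℝ :=
  x ^ d + ∑ i : Fin d, (-1 : ℝ) ^ (i.1 + 1) * s i * x ^ (d - 1 - i.1)

/-- The set of ESP vectors of real symmetric matrices: those `s` for which `P_s` splits over ℝ. -/
def ESPset (d : ℕ) : Set (Fin d → ℝ) :=
  {s | ∃ r : Fin d → ℝ, ∀ x, Pfun d s x = ∏ i, (x - r i)}

/-- `a` is the largest real root of `P_s`. -/
def IsMaxRoot (d : ℕ) (s : Fin d → ℝ) (a : ℝ) : Prop :=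
  Pfun d s a = 0 ∧ ∀ x, Pfun d s x = 0 → x ≤ a

/-- Cauchy-type root bound. -/
lemma rootBound (d : ℕ) (hd : 0 < d) (s : Fin d → ℝ) (x : ℝ)
    (hx : Pfun d s x = 0) : |x| ≤ 1 + ∑ i, |s i| := by
  have hsum : (0:ℝ) ≤ ∑ i, |s i| := Finset.sum_nonneg fun i _ => abs_nonneg _
  by_cases h1 : |x| ≤ 1
  · linarith
  push_neg at h1
  have hx0 : (0:ℝ) < |x| := lt_trans one_pos h1
  have heq : x ^ d = -∑ i : Fin d, (-1 : ℝ) ^ (i.1 + 1) * s i * x ^ (d - 1 - i.1) := by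
    unfold Pfun at hx; linarith
  have hbd : |x| ^ d ≤ (∑ i, |s i|) * |x| ^ (d - 1) := by
    calc |x| ^ d = |x ^ d| := (abs_pow x d).symm
      _ = |∑ i : Fin d, (-1 : ℝ) ^ (i.1 + 1) * s i * x ^ (d - 1 - i.1)| := by
          rw [heq, abs_neg]
      _ ≤ ∑ i : Fin d, |(-1 : ℝ) ^ (i.1 + 1) * s i * x ^ (d - 1 - i.1)| :=
          Finset.abs_sum_le_sum_abs _ _
      _ ≤ ∑ i : Fin d, |s i| * |x| ^ (d - 1) := by
          apply Finset.sum_le_sum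
          intro i _
          rw [abs_mul, abs_mul, abs_pow, abs_pow, abs_neg, abs_one, one_pow, one_mul]
          exact mul_le_mul_of_nonneg_left
            (pow_le_pow_right₀ h1.le (Nat.sub_le (d-1) i.1)) (abs_nonneg _)
      _ = (∑ i, |s i|) * |x| ^ (d - 1) := by rw [Finset.sum_mul]
  have hpow : |x| ^ d = |x| * |x| ^ (d - 1) := by
    conv_lhs => rw [← Nat.succ_pred_eq_of_pos hd]
    rw [pow_succ, Nat.pred_eq_sub_one, mul_comm]
  have hpos : (0:ℝ) < |x| ^ (d - 1) := pow_pos hx0 _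
  have : |x| * |x| ^ (d - 1) ≤ (∑ i, |s i|) * |x| ^ (d - 1) := by rw [← hpow]; exact hbd
  have h2 : |x| ≤ ∑ i, |s i| := le_of_mul_le_mul_right (by linarith [this]) hpos
  linarith

/-- Coefficient perturbation bound. -/
lemma diffBound (d : ℕ) (s t : Fin d → ℝ) (x : ℝ) :
    |Pfun d s x - Pfun d t x| ≤ ∑ i : Fin d, |s i - t i| * |x| ^ (d - 1 - i.1) := by
  have h0 : Pfun d s x - Pfun d t x
      = ∑ i : Fin d, (-1 : ℝ) ^ (i.1 + 1) * (s i - t i) * x ^ (d - 1 - i.1) := by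
    calc Pfun d s x - Pfun d t x
        = ∑ i : Fin d, ((-1 : ℝ) ^ (i.1 + 1) * s i * x ^ (d - 1 - i.1)
            - (-1 : ℝ) ^ (i.1 + 1) * t i * x ^ (d - 1 - i.1)) := by
          unfold Pfun; rw [Finset.sum_sub_distrib]; ring
      _ = ∑ i : Fin d, (-1 : ℝ) ^ (i.1 + 1) * (s i - t i) * x ^ (d - 1 - i.1) :=
          Finset.sum_congr rfl fun i _ => by ring
  rw [h0]
  calc |∑ i : Fin d, (-1 : ℝ) ^ (i.1 + 1) * (s i - t i) * x ^ (d - 1 - i.1)|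
      ≤ ∑ i : Fin d, |(-1 : ℝ) ^ (i.1 + 1) * (s i - t i) * x ^ (d - 1 - i.1)| :=
        Finset.abs_sum_le_sum_abs _ _
    _ ≤ ∑ i : Fin d, |s i - t i| * |x| ^ (d - 1 - i.1) := by
        apply Finset.sum_le_sum
        intro i _
        rw [abs_mul, abs_mul, abs_pow, abs_pow, abs_neg, abs_one, one_pow, one_mul]

/-- One-sided Hölder estimate for the largest roots. -/
lemma oneSide (d : ℕ) (hd : 0 < d) (M ε : ℝ) (hM : 1 ≤ M) (hε : 0 < ε)
    (s t : Fin d → ℝ) (hst : ∀ i, |t i - s i| ≤ 2 * ε)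
    (hMs : ∀ x, Pfun d s x = 0 → |x| ≤ M)
    (ht : t ∈ ESPset d) (a b : ℝ) (ha : IsMaxRoot d s a) (hb : IsMaxRoot d t b) :
    a - b ≤ (2 * d * M ^ (d - 1) * ε) ^ ((1 : ℝ) / d) := by
  obtain ⟨r, hr⟩ := ht
  have hroot : ∀ i, r i ≤ b := by
    intro i
    apply hb.2
    rw [hr]
    exact Finset.prod_eq_zero (Finset.mem_univ i) (by ring)
  have haM : |a| ≤ M := hMs a ha.1
  have hM0 : (0:ℝ) < M := lt_of_lt_of_le one_pos hM
  set K : ℝ := 2 * d * M ^ (d - 1) * ε with hKdef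
  have hK : 0 < K := by
    apply mul_pos _ hε
    apply mul_pos _ (pow_pos hM0 _)
    positivity
  have hprod : ∏ i, |a - r i| ≤ K := by
    rw [← Finset.abs_prod, ← hr]
    have h1 : |Pfun d t a| = |Pfun d t a - Pfun d s a| := by rw [ha.1, sub_zero]
    rw [h1]
    calc |Pfun d t a - Pfun d s a|
        ≤ ∑ i : Fin d, |t i - s i| * |a| ^ (d - 1 - i.1) := diffBound d t s a
      _ ≤ ∑ _i : Fin d, 2 * ε * M ^ (d - 1) := by
          apply Finset.sum_le_sum
          intro i _
          apply mul_le_mul (hst i) _ (pow_nonneg (abs_nonneg _) _) (by positivity)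
          calc |a| ^ (d - 1 - i.1) ≤ M ^ (d - 1 - i.1) :=
                pow_le_pow_left₀ (abs_nonneg _) haM _
            _ ≤ M ^ (d - 1) := pow_le_pow_right₀ hM (Nat.sub_le _ _)
      _ = K := by
          rw [Finset.sum_const, Finset.card_univ, Fintype.card_fin, nsmul_eq_mul, hKdef]
          ring
  set c : ℝ := K ^ ((1 : ℝ) / d) with hcdef
  have hc : 0 < c := Real.rpow_pos_of_pos hK _
  have hd' : (d:ℝ) ≠ 0 := Nat.cast_ne_zero.mpr hd.ne'
  have hcd : c ^ d = K := by
    rw [hcdef, ← Real.rpow_natCast (K ^ ((1:ℝ)/d)) d, ← Real.rpow_mul hK.le]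
    rw [one_div_mul_cancel hd', Real.rpow_one]
  have hex : ∃ i, |a - r i| ≤ c := by
    by_contra h
    push_neg at h
    have hlt : c ^ d < ∏ i, |a - r i| := by
      calc c ^ d = ∏ _i : Fin d, c := by
            rw [Finset.prod_const, Finset.card_univ, Fintype.card_fin]
        _ < ∏ i, |a - r i| :=
            Finset.prod_lt_prod_of_nonempty (fun i _ => hc) (fun i _ => h i)
              ⟨⟨0, hd⟩, Finset.mem_univ _⟩
    rw [hcd] at hlt
    linarith
  obtain ⟨i, hi⟩ := hex
  have : a - r i ≤ c := le_trans (le_abs_self _) hi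
  linarith [hroot i]

/-- The set of largest roots over the ℓ∞-ball `S(s₀, ε) ∩ ℰ` has diameter `O(ε^{1/d})`. -/
theorem stmt15 (d : ℕ) (hd : 0 < d) (s₀ : Fin d → ℝ) (hs₀ : s₀ ∈ ESPset d)
    (ε₀ : ℝ) (hε₀ : 0 < ε₀) :
    ∃ C > 0, ∀ ε : ℝ, 0 < ε → ε < ε₀ →
      ∀ s t : Fin d → ℝ, s ∈ Metric.closedBall s₀ ε ∩ ESPset d →
        t ∈ Metric.closedBall s₀ ε ∩ ESPset d →
        ∀ a b : ℝ, IsMaxRoot d s a → IsMaxRoot d t b →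
          |a - b| ≤ C * ε ^ ((1 : ℝ) / d) := by
  set M : ℝ := 1 + ∑ i, (|s₀ i| + ε₀) with hMdef
  have hM : 1 ≤ M := by
    have : (0:ℝ) ≤ ∑ i, (|s₀ i| + ε₀) :=
      Finset.sum_nonneg fun i _ => by positivity
    simp only [hMdef]; linarith
  have hM0 : (0:ℝ) < M := lt_of_lt_of_le one_pos hM
  have hB : (0:ℝ) < 2 * d * M ^ (d - 1) := by
    apply mul_pos _ (pow_pos hM0 _)
    have : (0:ℝ) < (d:ℝ) := Nat.cast_pos.mpr hd
    linarith
  refine ⟨(2 * d * M ^ (d - 1)) ^ ((1:ℝ)/d), Real.rpow_pos_of_pos hB _, ?_⟩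
  intro ε hε hεε₀ s t hs ht a b ha hb
  -- coordinatewise bounds
  have coord : ∀ (u : Fin d → ℝ), u ∈ Metric.closedBall s₀ ε → ∀ i, |u i - s₀ i| ≤ ε := by
    intro u hu i
    have h1 : dist (u i) (s₀ i) ≤ dist u s₀ := dist_le_pi_dist u s₀ i
    have h2 : dist u s₀ ≤ ε := Metric.mem_closedBall.mp hu
    rw [Real.dist_eq] at h1
    linarith
  have hscoord := coord s hs.1
  have htcoord := coord t ht.1
  have hst : ∀ i, |t i - s i| ≤ 2 * ε := by
    intro i
    have := abs_sub (t i - s₀ i) (s i - s₀ i)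
    calc |t i - s i| = |(t i - s₀ i) - (s i - s₀ i)| := by ring_nf
      _ ≤ |t i - s₀ i| + |s i - s₀ i| := abs_sub _ _
      _ ≤ 2 * ε := by linarith [hscoord i, htcoord i]
  have hts : ∀ i, |s i - t i| ≤ 2 * ε := by
    intro i; rw [abs_sub_comm]; exact hst i
  -- root bounds
  have rb : ∀ (u : Fin d → ℝ), (∀ i, |u i - s₀ i| ≤ ε) →
      ∀ x, Pfun d u x = 0 → |x| ≤ M := by
    intro u hu x hx
    have h1 := rootBound d hd u x hx
    have h2 : ∑ i, |u i| ≤ ∑ i, (|s₀ i| + ε₀) := by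
      apply Finset.sum_le_sum
      intro i _
      have := hu i
      have habs : |u i| ≤ |s₀ i| + |u i - s₀ i| := by
        calc |u i| = |s₀ i + (u i - s₀ i)| := by ring_nf
          _ ≤ |s₀ i| + |u i - s₀ i| := abs_add_le _ _
      linarith
    simp only [hMdef]; linarith
  have hMs := rb s hscoord
  have hMt := rb t htcoord
  have h1 := oneSide d hd M ε hM hε s t hst hMs ht.2 a b ha hb
  have h2 := oneSide d hd M ε hM hε t s hts hMt hs.2 b a hb ha
  have key : (2 * d * M ^ (d - 1) * ε) ^ ((1:ℝ)/d)
      = (2 * d * M ^ (d - 1)) ^ ((1:ℝ)/d) * ε ^ ((1:ℝ)/d) :=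
    Real.mul_rpow hB.le hε.le
  rw [key] at h1 h2
  rw [abs_sub_le_iff]
  exact ⟨h1, h2⟩
end

section
/- With the notation of the ESP map, if s₀ lies in the interior of ℰ and the roots of P_{s₀} are all simple, then the largest root λ₁(s) is a continuously differentiable function of s in a neighborhood of s₀, and the diameter of {λ₁(s) : ‖s − s₀‖_∞ ≤ ε} is at least cε + o(ε) for some c > 0 as ε → 0. -/
open scoped Topology

/-!
Each simple root `r i` of `P_{s₀}` continues, by the implicit function theorem, to a C¹ root
branch `ψ i` near `s₀`. By continuity the branches stay strictly ordered, so near `s₀` they are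
`d` distinct roots of a monic polynomial of degree `d`, hence all of its roots, and `ψ 0` is the
largest one. Moving only the constant coefficient `s_d` by `t` shifts `P`, so
`P_{s₀}(ψ 0 (s₀ + t e_d)) = ±t`; as `P_{s₀}` is Lipschitz near `r 0`, the values of `ψ 0` at
`s₀ ± ε e_d` are at least a fixed multiple of `ε` apart, which gives the bound with `o = 0`.
-/

open Filter Polynomial

theorem Polynomial.mem_range_of_isRoot_of_injective {R ι : Type*} [CommRing R] [IsDomain R]
    [Fintype ι] {p : R[X]} (hp : p ≠ 0) (hdeg : p.natDegree ≤ Fintype.card ι) {f : ι → R}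
    (hf : Function.Injective f) (hroots : ∀ i, p.IsRoot (f i)) {x : R} (hx : p.IsRoot x) :
    x ∈ Set.range f := by
  have hnodup : (Finset.univ.val.map f).Nodup := Finset.univ.nodup.map hf
  have hle : Finset.univ.val.map f ≤ p.roots :=
    (Multiset.le_iff_subset hnodup).mpr fun y hy => by
      obtain ⟨i, -, rfl⟩ := Multiset.mem_map.mp hy
      exact (mem_roots hp).mpr (hroots i)
  have heq := Multiset.eq_of_le_of_card_le hle (by simpa using p.card_roots'.trans hdeg)
  obtain ⟨i, -, rfl⟩ := Multiset.mem_map.mp (heq ▸ (mem_roots hp).mpr hx)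
  exact ⟨i, rfl⟩

theorem Polynomial.degree_sum_fin_C_mul_X_pow_lt {R : Type*} [Semiring R] {d : ℕ}
    (a : Fin d → R) : (∑ i : Fin d, C (a i) * X ^ (d - 1 - i.1)).degree < (d : WithBot ℕ) := by
  refine (degree_sum_le _ _).trans_lt ((Finset.sup_lt_iff (WithBot.bot_lt_coe d)).mpr fun i _ => ?_)
  exact (degree_C_mul_X_pow_le _ _).trans_lt (WithBot.coe_lt_coe.mpr (by omega : d - 1 - i.1 < d))

theorem hasDerivAt_prod_sub {𝕜 ι : Type*} [NontriviallyNormedField 𝕜] [Fintype ι]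
    [DecidableEq ι] (r : ι → 𝕜) (i : ι) :
    HasDerivAt (fun x => ∏ j, (x - r j)) (∏ j ∈ Finset.univ.erase i, (r i - r j)) (r i) := by
  have h := HasDerivAt.fun_finsetProd (u := Finset.univ) (f := fun j x => x - r j)
    (f' := fun _ => 1) (x := r i) fun j _ => (hasDerivAt_id (r i)).sub_const (r j)
  rwa [Finset.sum_eq_single i (fun j _ hj => by
    simp [Finset.prod_eq_zero (Finset.mem_erase.mpr ⟨Ne.symm hj, Finset.mem_univ i⟩)]) (by simp),
    smul_eq_mul, mul_one] at h

theorem ContinuousLinearMap.isInvertible_smulRight_one {𝕜 : Type*} [NontriviallyNormedField 𝕜]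
    {a : 𝕜} (ha : a ≠ 0) :
    ((1 : 𝕜 →L[𝕜] 𝕜).smulRight a).IsInvertible :=
  ⟨ContinuousLinearEquiv.unitsEquivAut 𝕜 (Units.mk0 a ha), by ext; simp⟩

theorem ContDiffAt.exists_implicit_of_hasDerivAt {E : Type*} [NormedAddCommGroup E]
    [NormedSpace ℝ E] [CompleteSpace E] {f : E × ℝ → ℝ} {u : E × ℝ} {n : WithTop ℕ∞}
    (hf : ContDiffAt ℝ n f u) (hn : n ≠ 0) {f' : ℝ}
    (hf' : HasDerivAt (fun y => f (u.1, y)) f' u.2) (hf'0 : f' ≠ 0) :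
    ∃ ψ : E → ℝ, ContDiffAt ℝ n ψ u.1 ∧ ψ u.1 = u.2 ∧ ∀ᶠ x in 𝓝 u.1, f (x, ψ x) = f u := by
  have hpartial : fderiv ℝ f u ∘L .inr ℝ E ℝ = (1 : ℝ →L[ℝ] ℝ).smulRight f' := by
    refine HasFDerivAt.unique ?_ hf'.hasFDerivAt
    exact (hf.differentiableAt hn).hasFDerivAt.comp u.2 (hasFDerivAt_prodMk_right u.1 u.2)
  have hinv := hpartial ▸ ContinuousLinearMap.isInvertible_smulRight_one hf'0
  exact ⟨_, hf.contDiffAt_implicitFunction hn hinv, hf.implicitFunction_apply_self hn hinv,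
    hf.eventually_apply_implicitFunction hn hinv⟩

theorem eventually_strictAnti_of_continuousAt {ι X α : Type*} [Finite ι] [Preorder ι]
    [TopologicalSpace X] [LinearOrder α] [TopologicalSpace α] [OrderClosedTopology α]
    {f : ι → X → α} {x : X} (hf : ∀ i, ContinuousAt (f i) x) (hx : StrictAnti fun i => f i x) :
    ∀ᶠ y in 𝓝 x, StrictAnti fun i => f i y := by
  simp only [StrictAnti, eventually_all]
  exact fun i j hij => (hf j).eventually_lt (hf i) (hx hij)

theorem exists_pos_mul_le_diam_image_closedBall {E : Type*} [NormedAddCommGroup E]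
    [NormedSpace ℝ E] [ProperSpace E] {Λ : E → ℝ} {V : Set E} {s₀ e : E} (hV : V ∈ 𝓝 s₀)
    (hΛ : ContinuousOn Λ V) (he : ‖e‖ = 1) {g : ℝ → ℝ} (hg : ContDiffAt ℝ 1 g (Λ s₀))
    (hleft : ∀ᶠ t in 𝓝 0, g (Λ (s₀ + t • e)) = t) :
    ∃ c > 0, ∀ᶠ ε in 𝓝[>] 0, c * ε ≤ Metric.diam (Λ '' Metric.closedBall s₀ ε) := by
  obtain ⟨K, U, hU, hgK⟩ := hg.exists_lipschitzOnWith
  have hline : Tendsto (fun t : ℝ => s₀ + t • e) (𝓝 0) (𝓝 s₀) :=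
    Continuous.tendsto' (by fun_prop) 0 s₀ (by simp)
  have hgood : ∀ᶠ t in 𝓝 (0 : ℝ), Λ (s₀ + t • e) ∈ U ∧ g (Λ (s₀ + t • e)) = t :=
    (hline.eventually ((hΛ.continuousAt hV).eventually_mem hU)).and hleft
  obtain ⟨δ, hδ, hball⟩ := Metric.nhds_basis_closedBall.mem_iff.mp hV
  have hsmall : ∀ᶠ ε in 𝓝[>] (0 : ℝ), 0 < ε ∧ ε ≤ δ := Ioc_mem_nhdsGT hδ
  refine ⟨2 / (K + 1), by positivity, ?_⟩
  filter_upwards [hsmall, nhdsWithin_le_nhds hgood,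
    nhdsWithin_le_nhds ((continuous_neg.tendsto' (0 : ℝ) 0 neg_zero).eventually hgood)]
    with ε ⟨hε, hεδ⟩ ⟨hUpos, hgpos⟩ ⟨hUneg, hgneg⟩
  have hmem : ∀ t : ℝ, |t| ≤ ε → Λ (s₀ + t • e) ∈ Λ '' Metric.closedBall s₀ ε := fun t ht =>
    ⟨_, by simpa [norm_smul, he] using ht, rfl⟩
  have hbdd : Bornology.IsBounded (Λ '' Metric.closedBall s₀ ε) :=
    ((isCompact_closedBall s₀ ε).image_of_continuousOn
      (hΛ.mono ((Metric.closedBall_subset_closedBall hεδ).trans hball))).isBounded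
  have hdist := Metric.dist_le_diam_of_mem hbdd (hmem ε (abs_of_pos hε).le)
    (hmem (-ε) (by rw [abs_neg, abs_of_pos hε]))
  have hlip := hgK.dist_le_mul _ hUpos _ hUneg
  rw [hgpos, hgneg, Real.dist_eq, show ε - -ε = 2 * ε by ring, abs_of_pos (by positivity)] at hlip
  rw [div_mul_eq_mul_div, div_le_iff₀ (by positivity)]
  nlinarith [dist_nonneg (x := Λ (s₀ + ε • e)) (y := Λ (s₀ + (-ε) • e))]

theorem contDiff_Pfun (d : ℕ) (n : WithTop ℕ∞) :
    ContDiff ℝ n fun p : (Fin d → ℝ) × ℝ => Pfun d p.1 p.2 := by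
  unfold Pfun
  fun_prop

noncomputable def Ppoly (d : ℕ) (s : Fin d → ℝ) : ℝ[X] :=
  X ^ d + ∑ i : Fin d, C ((-1) ^ (i.1 + 1) * s i) * X ^ (d - 1 - i.1)

theorem eval_Ppoly (d : ℕ) (s : Fin d → ℝ) (x : ℝ) : (Ppoly d s).eval x = Pfun d s x := by
  simp [Ppoly, Pfun, eval_finsetSum, mul_assoc]

theorem Ppoly_monic (d : ℕ) (s : Fin d → ℝ) : (Ppoly d s).Monic :=
  monic_X_pow_add (degree_sum_fin_C_mul_X_pow_lt _)

theorem natDegree_Ppoly (d : ℕ) (s : Fin d → ℝ) : (Ppoly d s).natDegree = d := by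
  rw [Ppoly, natDegree_add_eq_left_of_degree_lt, natDegree_X_pow]
  simpa only [degree_X_pow] using degree_sum_fin_C_mul_X_pow_lt _

theorem isMaxRoot_of_injective {d : ℕ} {s f : Fin d → ℝ} (hroots : ∀ i, Pfun d s (f i) = 0)
    (hf : Function.Injective f) {i₀ : Fin d} (hmax : ∀ i, f i ≤ f i₀) : IsMaxRoot d s (f i₀) := by
  refine ⟨hroots i₀, fun x hx => ?_⟩
  obtain ⟨i, rfl⟩ := mem_range_of_isRoot_of_injective (Ppoly_monic d s).ne_zero
    (by simp [natDegree_Ppoly]) hf (fun i => by simp [eval_Ppoly, hroots])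
    (by simpa [eval_Ppoly] using hx)
  exact hmax i

theorem exists_contDiffAt_root_branch {d : ℕ} {n : WithTop ℕ∞} (hn : n ≠ 0) {s₀ r : Fin d → ℝ}
    (hr : Function.Injective r) (hP : ∀ x, Pfun d s₀ x = ∏ i, (x - r i)) (i : Fin d) :
    ∃ ψ : (Fin d → ℝ) → ℝ, ContDiffAt ℝ n ψ s₀ ∧ ψ s₀ = r i ∧
      ∀ᶠ s in 𝓝 s₀, Pfun d s (ψ s) = 0 := by
  classical
  have hroot : Pfun d s₀ (r i) = 0 := by
    rw [hP]
    exact Finset.prod_eq_zero (Finset.mem_univ i) (sub_self _)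
  have hderiv : HasDerivAt (Pfun d s₀) (∏ j ∈ Finset.univ.erase i, (r i - r j)) (r i) := by
    simpa only [← funext hP] using hasDerivAt_prod_sub r i
  have hsimple : ∏ j ∈ Finset.univ.erase i, (r i - r j) ≠ 0 :=
    Finset.prod_ne_zero_iff.mpr fun j hj =>
      sub_ne_zero.mpr (hr.ne (Finset.ne_of_mem_erase hj).symm)
  obtain ⟨ψ, hψ, hψi, hψroot⟩ :=
    (contDiff_Pfun d n).contDiffAt.exists_implicit_of_hasDerivAt (u := (s₀, r i)) hn hderiv hsimple
  exact ⟨ψ, hψ, hψi, by simpa [hroot] using hψroot⟩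

theorem Pfun_add_smul_single_last (n : ℕ) (s : Fin (n + 1) → ℝ) (t x : ℝ) :
    Pfun (n + 1) (s + t • Pi.single (Fin.last n) 1) x =
      Pfun (n + 1) s x + (-1) ^ (n + 1) * t := by
  simp only [Pfun, Pi.add_apply, Pi.smul_apply, Pi.single_apply, smul_eq_mul, mul_ite, mul_one,
    mul_zero, mul_add, add_tsub_cancel_right, add_mul, ite_mul, zero_mul, Finset.sum_add_distrib,
    Finset.sum_ite_eq', Finset.mem_univ, ↓reduceIte, Fin.val_last, tsub_self, pow_zero]
  ring

theorem eventually_neg_one_pow_mul_Pfun_eq_of_root {n : ℕ} {s₀ : Fin (n + 1) → ℝ}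
    {Λ : (Fin (n + 1) → ℝ) → ℝ} (hΛ : ∀ᶠ s in 𝓝 s₀, Pfun (n + 1) s (Λ s) = 0) :
    ∀ᶠ t in 𝓝 (0 : ℝ),
      (-1) ^ n * Pfun (n + 1) s₀ (Λ (s₀ + t • Pi.single (Fin.last n) 1)) = t := by
  have hline : Tendsto (fun t : ℝ => s₀ + t • Pi.single (Fin.last n) 1) (𝓝 0) (𝓝 s₀) :=
    Continuous.tendsto' (by fun_prop) 0 s₀ (by simp)
  filter_upwards [hline.eventually hΛ] with t ht
  rw [Pfun_add_smul_single_last] at ht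
  have hsq : ((-1 : ℝ) ^ n) * (-1) ^ n = 1 := by rw [← mul_pow]; norm_num
  linear_combination (-1) ^ n * ht + t * hsq

theorem stmt16_general (d : ℕ) (hd : 0 < d) (s₀ : Fin d → ℝ)
    (hsimple : ∃ r : Fin d → ℝ, StrictAnti r ∧ ∀ x, Pfun d s₀ x = ∏ i, (x - r i)) :
    ∃ V ∈ 𝓝 s₀, ∃ Λ : (Fin d → ℝ) → ℝ,
      ContDiffOn ℝ 1 Λ V ∧ (∀ s ∈ V, IsMaxRoot d s (Λ s)) ∧
      ∃ c > 0, ∃ o : ℝ → ℝ, (o =o[𝓝[>] (0:ℝ)] fun ε => ε) ∧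
        ∀ᶠ ε in 𝓝[>] (0:ℝ),
          c * ε + o ε ≤ Metric.diam (Λ '' Metric.closedBall s₀ ε) := by
  obtain ⟨n, rfl⟩ : ∃ n, d = n + 1 := ⟨d - 1, by omega⟩
  obtain ⟨r, hr, hP⟩ := hsimple
  choose ψ hψ hψr hψroot using exists_contDiffAt_root_branch one_ne_zero hr.injective hP
  set V := {s | ContDiffAt ℝ 1 (ψ 0) s ∧ (∀ i, Pfun (n + 1) s (ψ i s) = 0) ∧
    StrictAnti fun i => ψ i s}
  have hV : V ∈ 𝓝 s₀ := ((hψ 0).eventually (by simp)).and ((eventually_all.mpr hψroot).and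
    (eventually_strictAnti_of_continuousAt (fun i => (hψ i).continuousAt) (by simpa [hψr])))
  refine ⟨V, hV, ψ 0, fun s hs => hs.1.contDiffWithinAt,
    fun s hs => isMaxRoot_of_injective hs.2.1 hs.2.2.injective fun i => hs.2.2.antitone i.zero_le,
    ?_⟩
  obtain ⟨c, hc, hdiam⟩ := exists_pos_mul_le_diam_image_closedBall (e := Pi.single (Fin.last n) 1)
    (g := fun x => (-1) ^ n * Pfun (n + 1) s₀ x) hV
    (fun s hs => hs.1.continuousAt.continuousWithinAt) (by rw [Pi.norm_single, norm_one])
    (by unfold Pfun; fun_prop) (eventually_neg_one_pow_mul_Pfun_eq_of_root (hψroot 0))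
  exact ⟨c, hc, 0, Asymptotics.isLittleO_zero _ _, by simpa using hdiam⟩

/-- If `s₀` is interior to `ℰ` and `P_{s₀}` has `d` distinct real roots, then the largest root is
a C¹ function of `s` near `s₀`, and the diameter of the set of largest roots over the ε-ball is
at least `cε + o(ε)`. -/
theorem stmt16 (d : ℕ) (hd : 0 < d) (s₀ : Fin d → ℝ) (hint : s₀ ∈ interior (ESPset d))
    (hsimple : ∃ r : Fin d → ℝ, StrictAnti r ∧ ∀ x, Pfun d s₀ x = ∏ i, (x - r i)) :
    ∃ V ∈ 𝓝 s₀, ∃ Λ : (Fin d → ℝ) → ℝ,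
      ContDiffOn ℝ 1 Λ V ∧ (∀ s ∈ V, IsMaxRoot d s (Λ s)) ∧
      ∃ c > 0, ∃ o : ℝ → ℝ, (o =o[𝓝[>] (0:ℝ)] fun ε => ε) ∧
        ∀ᶠ ε in 𝓝[>] (0:ℝ),
          c * ε + o ε ≤ Metric.diam (Λ '' Metric.closedBall s₀ ε) :=
  stmt16_general d hd s₀ hsimple
end
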